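/- Let v₁, v₂, v₃ be {−1,1}-valued random variables conditionally independent given y ∈ {−1,1}, with b = P(y=1)−P(y=−1), sensitivities ψⱼ and specificities ηⱼ, and define μⱼ = E[vⱼ]. Then E[(v₁−μ₁)(v₂−μ₂)(v₃−μ₃)] = −2b(1−b²) ∏ⱼ(2πⱼ−1), where πⱼ=(ψⱼ+ηⱼ)/2. In particular, if b = 0 (balanced classes), all off-diagonal third-order central moments vanish. -/

import Mathlib

/-!
On `{y = s}` the verifiers are independent, so the third central moment restricted to that
event, rescaled by `P(y = s)²`, factors into the product of the restricted first central
moments. With `p = P(y = 1)` and `q = P(y = -1)`, each of these equals `s · 2pq(2πⱼ - 1)`,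
so the third central moment is `(2pq)³ ∏ⱼ(2πⱼ - 1) (1/p² - 1/q²) = 8pq(q - p) ∏ⱼ(2πⱼ - 1)`,
and `p = (1 + b)/2`, `q = (1 - b)/2`.
-/

open MeasureTheory

lemma comp_eq_sum_indicator {Ω α : Type*} [DecidableEq α] {S : Finset α} {W : Ω → α}
    (hS : ∀ ω, W ω ∈ S) (g : α → ℝ) (ω : Ω) :
    g (W ω) = ∑ a ∈ S, {ω | W ω = a}.indicator (fun _ => g a) ω := by
  simp only [Set.indicator_apply, Set.mem_ofPred_eq, Finset.sum_ite_eq, hS ω, if_true]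

section FiniteValued

variable {Ω α : Type*} [MeasurableSpace Ω] [MeasurableSpace α] [MeasurableSingletonClass α]
  {μ : Measure Ω} [IsFiniteMeasure μ] {S : Finset α} {W : Ω → α}

lemma integrable_comp_of_mem_finset (hW : Measurable W) (hS : ∀ ω, W ω ∈ S) (g : α → ℝ) :
    Integrable (fun ω => g (W ω)) μ := by
  classical
  simp_rw [comp_eq_sum_indicator hS g]
  exact integrable_finsetSum _ fun a _ =>
    (integrable_const (g a)).indicator (hW (measurableSet_singleton a))

lemma setIntegral_comp_eq_sum (hW : Measurable W) (hS : ∀ ω, W ω ∈ S) (g : α → ℝ) (E : Set Ω) :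
    ∫ ω in E, g (W ω) ∂μ = ∑ a ∈ S, g a * μ.real ({ω | W ω = a} ∩ E) := by
  classical
  have hmeas (a : α) : MeasurableSet {ω | W ω = a} := hW (measurableSet_singleton a)
  simp_rw [comp_eq_sum_indicator hS g]
  rw [integral_finsetSum _ fun a _ => ((integrable_const (g a)).indicator (hmeas a)).integrableOn]
  refine Finset.sum_congr rfl fun a _ => ?_
  rw [integral_indicator_const _ (hmeas a), measureReal_restrict_apply (hmeas a), smul_eq_mul,
    mul_comm]

lemma setIntegral_prod_mul_pow_eq_prod {ι : Type*} [Fintype ι] [DecidableEq ι] {v : ι → Ω → α}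
    (hv : ∀ j, Measurable (v j)) (hS : ∀ j ω, v j ω ∈ S) (g : ι → α → ℝ) (E : Set Ω) (k : ℕ)
    -- conditional independence given `E`, with denominators cleared (`k = card ι - 1`)
    (hCI : ∀ a ∈ Fintype.piFinset fun _ => S,
      μ.real ((⋂ j, {ω | v j ω = a j}) ∩ E) * μ.real E ^ k
        = ∏ j, μ.real ({ω | v j ω = a j} ∩ E)) :
    (∫ ω in E, ∏ j, g j (v j ω) ∂μ) * μ.real E ^ k = ∏ j, ∫ ω in E, g j (v j ω) ∂μ := by
  have hW : Measurable fun ω j => v j ω := measurable_pi_lambda _ hv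
  have hSW : ∀ ω, (fun j => v j ω) ∈ Fintype.piFinset fun _ => S :=
    fun ω => Fintype.mem_piFinset.2 fun j => hS j ω
  have hset : ∀ a : ι → α, {ω | (fun j => v j ω) = a} = ⋂ j, {ω | v j ω = a j} := by
    intro a; ext ω; simp [funext_iff]
  rw [setIntegral_comp_eq_sum hW hSW (fun a => ∏ j, g j (a j)), Finset.sum_mul]
  simp_rw [setIntegral_comp_eq_sum (hv _) (hS _), Finset.prod_univ_sum]
  refine Finset.sum_congr rfl fun a ha => ?_
  rw [hset, mul_assoc, hCI a ha, Finset.prod_mul_distrib]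

end FiniteValued

section PlusMinusOne

variable {Ω : Type*} [MeasurableSpace Ω] {μ : Measure Ω} {w : Ω → ℝ}

lemma setIntegral_comp_of_pm_one [IsFiniteMeasure μ] (hw : Measurable w)
    (hpm : ∀ ω, w ω = 1 ∨ w ω = -1) (g : ℝ → ℝ) (E : Set Ω) :
    ∫ ω in E, g (w ω) ∂μ
      = g 1 * μ.real ({ω | w ω = 1} ∩ E) + g (-1) * μ.real ({ω | w ω = -1} ∩ E) := by
  rw [setIntegral_comp_eq_sum (S := {1, -1}) hw (by simpa using hpm), Finset.sum_pair (by norm_num)]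

lemma measureReal_inter_add_of_pm_one [IsFiniteMeasure μ] (hw : Measurable w)
    (hpm : ∀ ω, w ω = 1 ∨ w ω = -1) (E : Set Ω) :
    μ.real ({ω | w ω = 1} ∩ E) + μ.real ({ω | w ω = -1} ∩ E) = μ.real E := by
  simpa using (setIntegral_comp_of_pm_one (μ := μ) hw hpm (fun _ => 1) E).symm

lemma integral_eq_setIntegral_add_of_pm_one (hw : Measurable w)
    (hpm : ∀ ω, w ω = 1 ∨ w ω = -1) {f : Ω → ℝ} (hf : Integrable f μ) :
    ∫ ω, f ω ∂μ = ∫ ω in {ω | w ω = 1}, f ω ∂μ + ∫ ω in {ω | w ω = -1}, f ω ∂μ := by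
  have hcompl : {ω | w ω = 1}ᶜ = {ω | w ω = -1} := by
    ext ω; rcases hpm ω with h | h <;> simp [h] <;> norm_num
  rw [← hcompl, integral_add_compl (measurableSet_eq_fun hw measurable_const) hf]


lemma setIntegral_sub_integral_of_pm_one [IsProbabilityMeasure μ] {y : Ω → ℝ}
    (hw : Measurable w) (hwpm : ∀ ω, w ω = 1 ∨ w ω = -1)
    (hy : Measurable y) (hypm : ∀ ω, y ω = 1 ∨ y ω = -1) {s : ℝ} (hs : s = 1 ∨ s = -1) :
    ∫ ω in {ω | y ω = s}, (w ω - ∫ ω', w ω' ∂μ) ∂μ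
      = s * (2 * (μ.real ({ω | w ω = 1} ∩ {ω | y ω = 1}) * μ.real {ω | y ω = -1}
        + μ.real ({ω | w ω = -1} ∩ {ω | y ω = -1}) * μ.real {ω | y ω = 1}
        - μ.real {ω | y ω = 1} * μ.real {ω | y ω = -1})) := by
  have hint := integrable_comp_of_mem_finset (μ := μ) (S := {1, -1}) hw (by simpa using hwpm) id
  have hmean := integral_eq_setIntegral_add_of_pm_one hy hypm hint
  have hpq := measureReal_inter_add_of_pm_one (μ := μ) hy hypm Set.univ
  have hp := measureReal_inter_add_of_pm_one (μ := μ) hw hwpm {ω | y ω = 1}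
  have hq := measureReal_inter_add_of_pm_one (μ := μ) hw hwpm {ω | y ω = -1}
  simp only [Set.inter_univ, probReal_univ] at hpq
  simp only [id, setIntegral_comp_of_pm_one hw hwpm (fun x => x)] at hmean
  rw [setIntegral_comp_of_pm_one hw hwpm (fun x => x - ∫ ω', w ω' ∂μ)]
  set m := ∫ ω', w ω' ∂μ
  set p := μ.real {ω | y ω = 1}
  set q := μ.real {ω | y ω = -1}
  set A := μ.real ({ω | w ω = 1} ∩ {ω | y ω = 1})
  set D := μ.real ({ω | w ω = -1} ∩ {ω | y ω = -1})
  -- eliminates `P(w = -1, y = 1) = p - A`, `P(w = 1, y = -1) = q - D`, `q = 1 - p` and `m`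
  rcases hs with rfl | rfl
  · linear_combination (-m - (1 - p)) * hp - p * hmean - p * hq + (p - 2 * A) * hpq
  · linear_combination (1 - q - m) * hq - q * hmean + q * hp + (2 * D - q) * hpq

end PlusMinusOne

/-- For three conditionally independent binary verifiers,
`E[(v₁-μ₁)(v₂-μ₂)(v₃-μ₃)] = -2b(1-b²)∏ⱼ(2πⱼ-1)`; in particular it vanishes when `b = 0`. -/
theorem stmt13 {Ω : Type*} [MeasurableSpace Ω] (μ : Measure Ω) [IsProbabilityMeasure μ]
    (y : Ω → ℝ) (v : Fin 3 → Ω → ℝ)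
    (hy : ∀ ω, y ω = 1 ∨ y ω = -1)
    (hv : ∀ j ω, v j ω = 1 ∨ v j ω = -1)
    (hmy : Measurable y) (hmv : ∀ j, Measurable (v j))
    (hpos1 : μ {ω | y ω = 1} ≠ 0) (hposm : μ {ω | y ω = -1} ≠ 0)
    (b : ℝ) (ψ η π mu : Fin 3 → ℝ)
    (hb : (μ {ω | y ω = 1}).toReal = (1 + b) / 2)
    (hψ : ∀ j, ψ j
      = (μ ({ω | v j ω = 1} ∩ {ω | y ω = 1})).toReal / (μ {ω | y ω = 1}).toReal)
    (hη : ∀ j, η j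
      = (μ ({ω | v j ω = -1} ∩ {ω | y ω = -1})).toReal / (μ {ω | y ω = -1}).toReal)
    (hπ : ∀ j, π j = (ψ j + η j) / 2)
    (hmu : ∀ j, mu j = ∫ ω, v j ω ∂μ)
    -- joint conditional independence of v₁, v₂, v₃ given y
    (hCI : ∀ (a : Fin 3 → ℝ), (∀ j, a j = 1 ∨ a j = -1) → ∀ s : ℝ, (s = 1 ∨ s = -1) →
      (μ ((⋂ j, {ω | v j ω = a j}) ∩ {ω | y ω = s})).toReal * (μ {ω | y ω = s}).toReal ^ 2
        = ∏ j, (μ ({ω | v j ω = a j} ∩ {ω | y ω = s})).toReal) :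
    (∫ ω, (v 0 ω - mu 0) * (v 1 ω - mu 1) * (v 2 ω - mu 2) ∂μ)
        = -2 * b * (1 - b ^ 2) * ∏ j, (2 * π j - 1) ∧
    (b = 0 → (∫ ω, (v 0 ω - mu 0) * (v 1 ω - mu 1) * (v 2 ω - mu 2) ∂μ) = 0) := by
  simp only [← measureReal_def] at hb hψ hη hCI
  set p := μ.real {ω | y ω = 1}
  set q := μ.real {ω | y ω = -1}
  have hp : p ≠ 0 := (measureReal_ne_zero_iff).2 hpos1
  have hq : q ≠ 0 := (measureReal_ne_zero_iff).2 hposm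
  have hqb : q = (1 - b) / 2 := by
    have := measureReal_inter_add_of_pm_one (μ := μ) hmy hy Set.univ
    simp only [Set.inter_univ, probReal_univ] at this
    linarith
  have hvS : ∀ j ω, v j ω ∈ ({1, -1} : Finset ℝ) := by simpa using hv
  have hcond : ∀ j s, s = 1 ∨ s = -1 →
      ∫ ω in {ω | y ω = s}, (v j ω - mu j) ∂μ = s * (2 * p * q * (2 * π j - 1)) := by
    intro j s hs
    rw [hmu, setIntegral_sub_integral_of_pm_one (hmv j) (hv j) hmy hy hs, hπ, hψ, hη]
    field_simp
    ring
  have hfactor : ∀ s, s = 1 ∨ s = -1 →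
      (∫ ω in {ω | y ω = s}, ∏ j, (v j ω - mu j) ∂μ) * μ.real {ω | y ω = s} ^ 2
        = s * ((2 * p * q) ^ 3 * ∏ j, (2 * π j - 1)) := by
    intro s hs
    rw [setIntegral_prod_mul_pow_eq_prod hmv hvS (fun j x => x - mu j) _ 2
      fun a ha => hCI a (by simpa using ha) s hs]
    simp only [hcond _ _ hs, Finset.prod_mul_distrib, Finset.prod_const, Finset.card_univ,
      Fintype.card_fin]
    rcases hs with rfl | rfl <;> ring
  have hint : Integrable (fun ω => ∏ j, (v j ω - mu j)) μ :=
    integrable_comp_of_mem_finset (W := fun ω j => v j ω) (measurable_pi_lambda _ hmv)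
      (fun ω => Fintype.mem_piFinset.2 fun j => hvS j ω) fun a => ∏ j, (a j - mu j)
  have key : (∫ ω, (v 0 ω - mu 0) * (v 1 ω - mu 1) * (v 2 ω - mu 2) ∂μ)
      = -2 * b * (1 - b ^ 2) * ∏ j, (2 * π j - 1) := by
    have hprod (ω : Ω) : (v 0 ω - mu 0) * (v 1 ω - mu 1) * (v 2 ω - mu 2)
        = ∏ j, (v j ω - mu j) := (Fin.prod_univ_three fun j => v j ω - mu j).symm
    simp only [hprod]
    rw [integral_eq_setIntegral_add_of_pm_one hmy hy hint,
      eq_div_of_mul_eq (pow_ne_zero 2 hp) (hfactor 1 (.inl rfl)),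
      eq_div_of_mul_eq (pow_ne_zero 2 hq) (hfactor (-1) (.inr rfl))]
    field_simp
    rw [hb, hqb]
    ring
  exact ⟨key, fun hb0 => by rw [key, hb0]; ring⟩
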